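/- As operators on 𝒫 the following relations hold (brackets denote commutators, braces anticommutators): [D,G] = L, {d,d*} = L, d² = 0, (d*)² = 0, and L commutes with each of G, D, d, d*; moreover [D,d] = [D,d*] = 0 and [G,d] = [G,d*] = 0 (so G, D, L, d, d* realize the Heisenberg Lie superalgebra 𝔥(2|1,1) with center spanned by L). In addition the following cross relations with the fiberwise operators hold: [D,R] = 2G, [G,T] = −2D, [G,δ] = −d, [G,Q*] = −d*, [D,δ*] = d*, [D,Q] = d, {d,δ*} = G, {d,Q*} = D, {d*,δ} = D, {d*,Q} = G, {d,δ} = 0, {d,Q} = 0, {d*,δ*} = 0, {d*,Q*} = 0. -/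

import Mathlib

open MvPolynomial Finset

namespace SpinQuant

noncomputable section

/-- Diagonal entries of the signature-`(p,q)` bilinear form `η` on `ℝⁿ`, `n = p + q`:
`+1` for the first `p` indices and `-1` for the last `q` ones.  Since `η` is diagonal
and equal to its inverse, these are simultaneously the `η_{ii}` and the `η^{ii}`. -/
def eta (p q : ℕ) (i : Fin (p + q)) : ℝ := if (i : ℕ) < p then 1 else -1

/-- The supercommutative algebra `𝒫 = ℝ[x¹,…,xⁿ,p₁,…,pₙ] ⊗ Λ(ξ¹,…,ξⁿ)`, modeled as
families of polynomials in the even variables `x^i` (the `Sum.inl` indeterminates) and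
`p_i` (the `Sum.inr` indeterminates), indexed by the subsets of `Fin n` recording the
monomials in the odd variables `ξ^i`. -/
abbrev PS (p q : ℕ) := Finset (Fin (p + q)) → MvPolynomial (Fin (p + q) ⊕ Fin (p + q)) ℝ

/-- Koszul sign of moving `ξ^i` through the monomial `ξ^S`. -/
def sgn (p q : ℕ) (i : Fin (p + q)) (S : Finset (Fin (p + q))) : ℝ :=
  (-1) ^ (S.filter (fun j => j < i)).card

/-- Multiplication by the even variable `x^i`. -/
def xMul (p q : ℕ) (i : Fin (p + q)) : Module.End ℝ (PS p q) where
  toFun f S := X (Sum.inl i) * f S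
  map_add' f g := by funext S; simp [mul_add]
  map_smul' c f := by funext S; simp [mul_smul_comm]

/-- The partial derivative `∂/∂x^i`. -/
def xD (p q : ℕ) (i : Fin (p + q)) : Module.End ℝ (PS p q) where
  toFun f S := pderiv (Sum.inl i) (f S)
  map_add' f g := by funext S; simp
  map_smul' c f := by funext S; simp

/-- Multiplication by the even variable `p_i`. -/
def pMul (p q : ℕ) (i : Fin (p + q)) : Module.End ℝ (PS p q) where
  toFun f S := X (Sum.inr i) * f S
  map_add' f g := by funext S; simp [mul_add]
  map_smul' c f := by funext S; simp [mul_smul_comm]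

/-- The partial derivative `∂/∂p_i`. -/
def pD (p q : ℕ) (i : Fin (p + q)) : Module.End ℝ (PS p q) where
  toFun f S := pderiv (Sum.inr i) (f S)
  map_add' f g := by funext S; simp
  map_smul' c f := by funext S; simp

/-- Exterior multiplication by the odd variable `ξ^i`. -/
def xiMul (p q : ℕ) (i : Fin (p + q)) : Module.End ℝ (PS p q) where
  toFun f S := if i ∈ S then sgn p q i S • f (S.erase i) else 0
  map_add' f g := by funext S; by_cases h : i ∈ S <;> simp [h, smul_add]
  map_smul' c f := by funext S; by_cases h : i ∈ S <;> simp [h, smul_smul, mul_comm]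

/-- The odd superderivation `∂/∂ξ^i`, determined by `∂_{ξ^i}(ξ^j) = δ_i^j`. -/
def xiD (p q : ℕ) (i : Fin (p + q)) : Module.End ℝ (PS p q) where
  toFun f S := if i ∈ S then 0 else sgn p q i (insert i S) • f (insert i S)
  map_add' f g := by funext S; by_cases h : i ∈ S <;> simp [h, smul_add]
  map_smul' c f := by funext S; by_cases h : i ∈ S <;> simp [h, smul_smul, mul_comm]

/-- `R`, multiplication by `η^{ij} p_i p_j`. -/
def opR (p q : ℕ) : Module.End ℝ (PS p q) := ∑ i, eta p q i • (pMul p q i * pMul p q i)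

/-- The even Euler operator `ℰ = p_i ∂_{p_i}`. -/
def opE (p q : ℕ) : Module.End ℝ (PS p q) := ∑ i, pMul p q i * pD p q i

/-- The trace operator `T = η_{ij} ∂_{p_i} ∂_{p_j}`. -/
def opT (p q : ℕ) : Module.End ℝ (PS p q) := ∑ i, eta p q i • (pD p q i * pD p q i)

/-- The odd Euler operator `Σ = ξ^i ∂_{ξ^i}`. -/
def opS (p q : ℕ) : Module.End ℝ (PS p q) := ∑ i, xiMul p q i * xiD p q i

/-- `Q`, multiplication by `ξ^i p_i`. -/
def opQ (p q : ℕ) : Module.End ℝ (PS p q) := ∑ i, xiMul p q i * pMul p q i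

/-- `Q* = ∂_{ξ^i} ∂_{p_i}`. -/
def opQs (p q : ℕ) : Module.End ℝ (PS p q) := ∑ i, xiD p q i * pD p q i

/-- The Koszul differential `δ = η_{ij} ξ^i ∂_{p_j}`. -/
def opd (p q : ℕ) : Module.End ℝ (PS p q) := ∑ i, eta p q i • (xiMul p q i * pD p q i)

/-- The Koszul codifferential `δ* = η^{ij} p_i ∂_{ξ^j}`. -/
def opds (p q : ℕ) : Module.End ℝ (PS p q) := ∑ i, eta p q i • (pMul p q i * xiD p q i)

/-- The gradient `G = η^{ij} p_i ∂_{x^j}`. -/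
def opG (p q : ℕ) : Module.End ℝ (PS p q) := ∑ i, eta p q i • (pMul p q i * xD p q i)

/-- The divergence `D = ∂_{p_i} ∂_{x^i}`. -/
def opD (p q : ℕ) : Module.End ℝ (PS p q) := ∑ i, pD p q i * xD p q i

/-- The Laplacian `L = η^{ij} ∂_{x^i} ∂_{x^j}`. -/
def opL (p q : ℕ) : Module.End ℝ (PS p q) := ∑ i, eta p q i • (xD p q i * xD p q i)

/-- The de Rham differential `d = ξ^i ∂_{x^i}`. -/
def opdR (p q : ℕ) : Module.End ℝ (PS p q) := ∑ i, xiMul p q i * xD p q i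

/-- The de Rham codifferential `d* = η^{ij} ∂_{ξ^i} ∂_{x^j}`. -/
def opdRs (p q : ℕ) : Module.End ℝ (PS p q) := ∑ i, eta p q i • (xiD p q i * xD p q i)

/-- The commutator `[A,B] = AB − BA`. -/
def cm {p q : ℕ} (A B : Module.End ℝ (PS p q)) : Module.End ℝ (PS p q) := A * B - B * A

/-- The anticommutator `{A,B} = AB + BA`. -/
def acm {p q : ℕ} (A B : Module.End ℝ (PS p q)) : Module.End ℝ (PS p q) := A * B + B * A

/-!
Among the operators `∂_{x^i}, p_i, ∂_{p_i}, ξ^i, ∂_{ξ^i}` the only non-vanishing (super)brackets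
are `[∂_{p_i}, p_j] = δ_ij` and `{ξ^i, ∂_{ξ^j}} = δ_ij`; the second is where the Koszul signs
enter. All operators of the statement are quadratic in these generators, so each relation follows
by expanding with the Leibniz rules `[A, BC] = [A, B] C + B [A, C]`, `{A, BC} = {A, B} C - B [A, C]`
(and their mirror images) down to brackets of generators. `d² = 0` is read off from `{d, d} = 0`.
-/

section Bracket

variable {p q : ℕ} (A B C : Module.End ℝ (PS p q))

lemma cm_mul_left : cm (A * B) C = A * cm B C + cm A C * B := by
  simp only [cm, mul_sub, sub_mul, mul_assoc]; abel

lemma cm_mul_right : cm A (B * C) = cm A B * C + B * cm A C := by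
  simp only [cm, mul_sub, sub_mul, mul_assoc]; abel

lemma acm_mul_left : acm (A * B) C = A * cm B C + acm A C * B := by
  simp only [cm, acm, mul_sub, add_mul, mul_assoc]; abel

lemma acm_mul_right : acm A (B * C) = acm A B * C - B * cm A C := by
  simp only [cm, acm, mul_sub, add_mul, mul_assoc]; abel

lemma cm_smul_left (c : ℝ) : cm (c • A) B = c • cm A B := by
  simp only [cm, smul_mul_assoc, mul_smul_comm, smul_sub]

lemma cm_smul_right (c : ℝ) : cm A (c • B) = c • cm A B := by
  simp only [cm, smul_mul_assoc, mul_smul_comm, smul_sub]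

lemma acm_smul_left (c : ℝ) : acm (c • A) B = c • acm A B := by
  simp only [acm, smul_mul_assoc, mul_smul_comm, smul_add]

lemma acm_smul_right (c : ℝ) : acm A (c • B) = c • acm A B := by
  simp only [acm, smul_mul_assoc, mul_smul_comm, smul_add]

lemma cm_sum_left {ι : Type*} (s : Finset ι) (A : ι → Module.End ℝ (PS p q)) :
    cm (∑ i ∈ s, A i) B = ∑ i ∈ s, cm (A i) B := by
  simp only [cm, Finset.sum_mul, Finset.mul_sum, Finset.sum_sub_distrib]

lemma cm_sum_right {ι : Type*} (s : Finset ι) (B : ι → Module.End ℝ (PS p q)) :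
    cm A (∑ i ∈ s, B i) = ∑ i ∈ s, cm A (B i) := by
  simp only [cm, Finset.sum_mul, Finset.mul_sum, Finset.sum_sub_distrib]

lemma acm_sum_left {ι : Type*} (s : Finset ι) (A : ι → Module.End ℝ (PS p q)) :
    acm (∑ i ∈ s, A i) B = ∑ i ∈ s, acm (A i) B := by
  simp only [acm, Finset.sum_mul, Finset.mul_sum, Finset.sum_add_distrib]

lemma acm_sum_right {ι : Type*} (s : Finset ι) (B : ι → Module.End ℝ (PS p q)) :
    acm A (∑ i ∈ s, B i) = ∑ i ∈ s, acm A (B i) := by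
  simp only [acm, Finset.sum_mul, Finset.mul_sum, Finset.sum_add_distrib]

lemma cm_swap : cm B A = -cm A B := by
  simp only [cm, neg_sub]

lemma acm_swap : acm B A = acm A B := by
  simp only [acm, add_comm]

variable {A B}

lemma cm_eq_zero_of_commute (h : Commute A B) : cm A B = 0 :=
  sub_eq_zero.2 h.eq

lemma cm_eq_zero_of_commute' (h : Commute B A) : cm A B = 0 :=
  cm_eq_zero_of_commute h.symm

lemma mul_self_eq_zero_of_acm_self (h : acm A A = 0) : A * A = 0 := by
  rwa [acm, ← two_smul ℝ, smul_eq_zero, or_iff_right two_ne_zero] at h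

end Bracket

lemma pderiv_comm {σ R : Type*} [CommRing R] (i j : σ) (f : MvPolynomial σ R) :
    pderiv i (pderiv j f) = pderiv j (pderiv i f) := by
  classical
  have h : ⁅pderiv i, pderiv j⁆ = (0 : Derivation R (MvPolynomial σ R) (MvPolynomial σ R)) :=
    derivation_ext fun k => by
      rw [Derivation.commutator_apply]; simp only [pderiv_X, Pi.single_apply]; split_ifs <;> simp
  rw [← sub_eq_zero, ← Derivation.commutator_apply, h, Derivation.zero_apply]

@[simp] lemma eta_mul_self {p q : ℕ} (i : Fin (p + q)) : eta p q i * eta p q i = 1 := by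
  unfold eta; split_ifs <;> norm_num

section Signs

variable {p q : ℕ} (i j : Fin (p + q)) (S : Finset (Fin (p + q)))

@[simp] lemma sgn_mul_self : sgn p q i S * sgn p q i S = 1 := by
  rw [sgn, ← mul_pow]; norm_num

@[simp] lemma sgn_insert_self : sgn p q i (insert i S) = sgn p q i S := by
  simp [sgn, Finset.filter_insert]

variable {j S}

lemma sgn_insert_of_notMem (h : j ∉ S) :
    sgn p q i (insert j S) = (if j < i then -1 else 1) * sgn p q i S := by
  unfold sgn; rw [Finset.filter_insert]
  split_ifs with hj
  · rw [Finset.card_insert_of_notMem (by simp [h]), pow_succ, mul_comm]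
  · rw [one_mul]

lemma sgn_erase_of_mem (h : j ∈ S) :
    sgn p q i (S.erase j) = (if j < i then -1 else 1) * sgn p q i S := by
  conv_rhs => rw [← Finset.insert_erase h, sgn_insert_of_notMem i (Finset.notMem_erase j S)]
  split_ifs <;> ring

variable {i}

lemma sgn_exchange (hij : i ≠ j) : sgn p q i S * ((if i < j then -1 else 1) * sgn p q j S) +
    sgn p q j S * ((if j < i then -1 else 1) * sgn p q i S) = 0 := by
  rcases hij.lt_or_gt with h | h <;> simp [h, h.not_gt] <;> ring

end Signs

section Generators

variable {p q : ℕ} (i j : Fin (p + q))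

lemma end_ext {A B : Module.End ℝ (PS p q)} (h : ∀ f S, A f S = B f S) : A = B :=
  LinearMap.ext fun f => funext (h f)

@[simp] lemma xD_apply (f : PS p q) (S) : xD p q i f S = pderiv (Sum.inl i) (f S) := rfl
@[simp] lemma pMul_apply (f : PS p q) (S) : pMul p q i f S = X (Sum.inr i) * f S := rfl
@[simp] lemma pD_apply (f : PS p q) (S) : pD p q i f S = pderiv (Sum.inr i) (f S) := rfl
@[simp] lemma xiMul_apply (f : PS p q) (S) :
    xiMul p q i f S = if i ∈ S then sgn p q i S • f (S.erase i) else 0 := rfl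
@[simp] lemma xiD_apply (f : PS p q) (S) :
    xiD p q i f S = if i ∈ S then 0 else sgn p q i (insert i S) • f (insert i S) := rfl

lemma commute_xiMul_of_coeffwise {A : Module.End ℝ (PS p q)}
    (φ : MvPolynomial (Fin (p + q) ⊕ Fin (p + q)) ℝ →ₗ[ℝ]
      MvPolynomial (Fin (p + q) ⊕ Fin (p + q)) ℝ)
    (hA : ∀ f S, A f S = φ (f S)) : Commute A (xiMul p q i) := by
  refine end_ext fun f S => ?_
  by_cases h : i ∈ S <;> simp [Module.End.mul_apply, hA, h]

lemma commute_xiD_of_coeffwise {A : Module.End ℝ (PS p q)}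
    (φ : MvPolynomial (Fin (p + q) ⊕ Fin (p + q)) ℝ →ₗ[ℝ]
      MvPolynomial (Fin (p + q) ⊕ Fin (p + q)) ℝ)
    (hA : ∀ f S, A f S = φ (f S)) : Commute A (xiD p q i) := by
  refine end_ext fun f S => ?_
  by_cases h : i ∈ S <;> simp [Module.End.mul_apply, hA, h]

lemma xD_commute_xiMul : Commute (xD p q i) (xiMul p q j) :=
  commute_xiMul_of_coeffwise j (pderiv (Sum.inl i)).toLinearMap fun _ _ => rfl

lemma xD_commute_xiD : Commute (xD p q i) (xiD p q j) :=
  commute_xiD_of_coeffwise j (pderiv (Sum.inl i)).toLinearMap fun _ _ => rfl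

lemma pD_commute_xiMul : Commute (pD p q i) (xiMul p q j) :=
  commute_xiMul_of_coeffwise j (pderiv (Sum.inr i)).toLinearMap fun _ _ => rfl

lemma pD_commute_xiD : Commute (pD p q i) (xiD p q j) :=
  commute_xiD_of_coeffwise j (pderiv (Sum.inr i)).toLinearMap fun _ _ => rfl

lemma pMul_commute_xiMul : Commute (pMul p q i) (xiMul p q j) :=
  commute_xiMul_of_coeffwise j (LinearMap.mulLeft ℝ (X (Sum.inr i))) fun _ _ => rfl

lemma pMul_commute_xiD : Commute (pMul p q i) (xiD p q j) :=
  commute_xiD_of_coeffwise j (LinearMap.mulLeft ℝ (X (Sum.inr i))) fun _ _ => rfl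

lemma xD_commute_xD : Commute (xD p q i) (xD p q j) := by
  refine end_ext fun f S => ?_; simp [Module.End.mul_apply, pderiv_comm]

lemma xD_commute_pD : Commute (xD p q i) (pD p q j) := by
  refine end_ext fun f S => ?_; simp [Module.End.mul_apply, pderiv_comm]

lemma xD_commute_pMul : Commute (xD p q i) (pMul p q j) := by
  refine end_ext fun f S => ?_; simp [Module.End.mul_apply]

lemma pD_commute_pD : Commute (pD p q i) (pD p q j) := by
  refine end_ext fun f S => ?_; simp [Module.End.mul_apply, pderiv_comm]

lemma pMul_commute_pMul : Commute (pMul p q i) (pMul p q j) := by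
  refine end_ext fun f S => ?_; simp [Module.End.mul_apply, mul_left_comm]

lemma cm_pD_pMul : cm (pD p q i) (pMul p q j) = if i = j then 1 else 0 := by
  refine end_ext fun f S => ?_
  by_cases h : i = j <;> simp [cm, Module.End.mul_apply, pderiv_X, h]

end Generators

section CAR

variable {p q : ℕ} (i j : Fin (p + q))

lemma acm_xiMul_xiMul : acm (xiMul p q i) (xiMul p q j) = 0 := by
  refine end_ext fun f S => ?_
  rcases eq_or_ne i j with rfl | hij
  · by_cases hS : i ∈ S <;> simp [acm, Module.End.mul_apply, hS]
  · by_cases hi : i ∈ S <;> by_cases hj : j ∈ S <;>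
      simp [acm, Module.End.mul_apply, hi, hj, hij, hij.symm]
    rw [Finset.erase_right_comm, sgn_erase_of_mem _ hi, sgn_erase_of_mem _ hj, smul_smul,
      smul_smul, ← add_smul, sgn_exchange hij, zero_smul]

lemma acm_xiD_xiD : acm (xiD p q i) (xiD p q j) = 0 := by
  refine end_ext fun f S => ?_
  rcases eq_or_ne i j with rfl | hij
  · by_cases hS : i ∈ S <;> simp [acm, Module.End.mul_apply, hS]
  · by_cases hi : i ∈ S <;> by_cases hj : j ∈ S <;>
      simp [acm, Module.End.mul_apply, hi, hj, hij, hij.symm]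
    rw [Finset.insert_comm, sgn_insert_of_notMem _ hi, sgn_insert_of_notMem _ hj, smul_smul,
      smul_smul, ← add_smul, sgn_exchange hij, zero_smul]

lemma acm_xiMul_xiD : acm (xiMul p q i) (xiD p q j) = if i = j then 1 else 0 := by
  refine end_ext fun f S => ?_
  rcases eq_or_ne i j with rfl | hij
  · by_cases hS : i ∈ S <;> simp [acm, Module.End.mul_apply, hS, smul_smul]
  · by_cases hi : i ∈ S <;> by_cases hj : j ∈ S <;>
      simp [acm, Module.End.mul_apply, hi, hj, hij, hij.symm]
    rw [← Finset.erase_insert_of_ne hij.symm, sgn_erase_of_mem _ hi, sgn_insert_of_notMem _ hj,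
      smul_smul, smul_smul, ← add_smul, sgn_exchange hij, zero_smul]

lemma acm_xiD_xiMul : acm (xiD p q i) (xiMul p q j) = if j = i then 1 else 0 := by
  rw [acm_swap, acm_xiMul_xiD]

end CAR

section Relations

variable (p q : ℕ)

attribute [local simp] cm_mul_left cm_mul_right acm_mul_left acm_mul_right cm_smul_left
  cm_smul_right acm_smul_left acm_smul_right cm_sum_left cm_sum_right acm_sum_left acm_sum_right
  cm_eq_zero_of_commute cm_eq_zero_of_commute' xD_commute_xD xD_commute_pD xD_commute_pMul
  xD_commute_xiMul xD_commute_xiD pD_commute_pD pD_commute_xiMul pD_commute_xiD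
  pMul_commute_pMul pMul_commute_xiMul pMul_commute_xiD cm_pD_pMul
  acm_xiMul_xiMul acm_xiD_xiD acm_xiMul_xiD acm_xiD_xiMul ite_mul mul_ite smul_smul
  eta_mul_self

lemma cm_opD_opG : cm (opD p q) (opG p q) = opL p q := by
  simp [opD, opG, opL]

lemma acm_opdR_opdRs : acm (opdR p q) (opdRs p q) = opL p q := by
  simp [opdR, opdRs, opL]

lemma opdR_mul_opdR : opdR p q * opdR p q = 0 :=
  mul_self_eq_zero_of_acm_self (by simp [opdR])

lemma opdRs_mul_opdRs : opdRs p q * opdRs p q = 0 :=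
  mul_self_eq_zero_of_acm_self (by simp [opdRs])

lemma cm_opL_opG : cm (opL p q) (opG p q) = 0 := by
  simp [opL, opG]

lemma cm_opL_opD : cm (opL p q) (opD p q) = 0 := by
  simp [opL, opD]

lemma cm_opL_opdR : cm (opL p q) (opdR p q) = 0 := by
  simp [opL, opdR]

lemma cm_opL_opdRs : cm (opL p q) (opdRs p q) = 0 := by
  simp [opL, opdRs]

lemma cm_opD_opdR : cm (opD p q) (opdR p q) = 0 := by
  simp [opD, opdR]

lemma cm_opD_opdRs : cm (opD p q) (opdRs p q) = 0 := by
  simp [opD, opdRs]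

lemma cm_opG_opdR : cm (opG p q) (opdR p q) = 0 := by
  simp [opG, opdR]

lemma cm_opG_opdRs : cm (opG p q) (opdRs p q) = 0 := by
  simp [opG, opdRs]

lemma cm_opD_opR : cm (opD p q) (opR p q) = (2 : ℝ) • opG p q := by
  simp [opD, opR, opG, (xD_commute_pMul _ _).eq, Finset.smul_sum, ← two_smul ℝ,
    mul_comm _ (2 : ℝ)]

lemma cm_opT_opG : cm (opT p q) (opG p q) = (2 : ℝ) • opD p q := by
  simp [opG, opT, opD, Finset.smul_sum, ← two_smul ℝ, ← mul_assoc]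

lemma cm_opG_opT : cm (opG p q) (opT p q) = (-2 : ℝ) • opD p q := by
  rw [cm_swap, cm_opT_opG]
  exact (neg_smul _ _).symm

lemma cm_opd_opG : cm (opd p q) (opG p q) = opdR p q := by
  simp [opG, opd, opdR]

lemma cm_opG_opd : cm (opG p q) (opd p q) = -opdR p q := by
  rw [cm_swap, cm_opd_opG]

lemma cm_opQs_opG : cm (opQs p q) (opG p q) = opdRs p q := by
  simp [opG, opQs, opdRs]

lemma cm_opG_opQs : cm (opG p q) (opQs p q) = -opdRs p q := by
  rw [cm_swap, cm_opQs_opG]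

lemma cm_opD_opds : cm (opD p q) (opds p q) = opdRs p q := by
  simp [opD, opds, opdRs, (xD_commute_xiD _ _).eq]

lemma cm_opD_opQ : cm (opD p q) (opQ p q) = opdR p q := by
  simp [opD, opQ, opdR]

lemma acm_opdR_opds : acm (opdR p q) (opds p q) = opG p q := by
  simp [opdR, opds, opG, (pMul_commute_xiD _ _).eq, (xD_commute_pMul _ _).eq]

lemma acm_opdR_opQs : acm (opdR p q) (opQs p q) = opD p q := by
  simp [opdR, opQs, opD, (xD_commute_pD _ _).eq]

lemma acm_opdRs_opd : acm (opdRs p q) (opd p q) = opD p q := by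
  simp [opdRs, opd, opD, (xD_commute_pD _ _).eq]

lemma acm_opdRs_opQ : acm (opdRs p q) (opQ p q) = opG p q := by
  simp [opdRs, opQ, opG, (xD_commute_pMul _ _).eq]

lemma acm_opdR_opd : acm (opdR p q) (opd p q) = 0 := by
  simp [opdR, opd]

lemma acm_opdR_opQ : acm (opdR p q) (opQ p q) = 0 := by
  simp [opdR, opQ]

lemma acm_opdRs_opds : acm (opdRs p q) (opds p q) = 0 := by
  simp [opdRs, opds, (pMul_commute_xiD _ _).eq]

lemma acm_opdRs_opQs : acm (opdRs p q) (opQs p q) = 0 := by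
  simp [opdRs, opQs]

end Relations

theorem statement5_general (p q : ℕ) :
    cm (opD p q) (opG p q) = opL p q ∧
    acm (opdR p q) (opdRs p q) = opL p q ∧
    opdR p q * opdR p q = 0 ∧
    opdRs p q * opdRs p q = 0 ∧
    cm (opL p q) (opG p q) = 0 ∧
    cm (opL p q) (opD p q) = 0 ∧
    cm (opL p q) (opdR p q) = 0 ∧
    cm (opL p q) (opdRs p q) = 0 ∧
    cm (opD p q) (opdR p q) = 0 ∧
    cm (opD p q) (opdRs p q) = 0 ∧
    cm (opG p q) (opdR p q) = 0 ∧
    cm (opG p q) (opdRs p q) = 0 ∧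
    cm (opD p q) (opR p q) = (2:ℝ) • opG p q ∧
    cm (opG p q) (opT p q) = (-2:ℝ) • opD p q ∧
    cm (opG p q) (opd p q) = - opdR p q ∧
    cm (opG p q) (opQs p q) = - opdRs p q ∧
    cm (opD p q) (opds p q) = opdRs p q ∧
    cm (opD p q) (opQ p q) = opdR p q ∧
    acm (opdR p q) (opds p q) = opG p q ∧
    acm (opdR p q) (opQs p q) = opD p q ∧
    acm (opdRs p q) (opd p q) = opD p q ∧
    acm (opdRs p q) (opQ p q) = opG p q ∧
    acm (opdR p q) (opd p q) = 0 ∧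
    acm (opdR p q) (opQ p q) = 0 ∧
    acm (opdRs p q) (opds p q) = 0 ∧
    acm (opdRs p q) (opQs p q) = 0 :=
  ⟨cm_opD_opG p q, acm_opdR_opdRs p q, opdR_mul_opdR p q, opdRs_mul_opdRs p q,
    cm_opL_opG p q, cm_opL_opD p q, cm_opL_opdR p q, cm_opL_opdRs p q,
    cm_opD_opdR p q, cm_opD_opdRs p q, cm_opG_opdR p q, cm_opG_opdRs p q,
    cm_opD_opR p q, cm_opG_opT p q, cm_opG_opd p q, cm_opG_opQs p q,
    cm_opD_opds p q, cm_opD_opQ p q, acm_opdR_opds p q, acm_opdR_opQs p q,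
    acm_opdRs_opd p q, acm_opdRs_opQ p q, acm_opdR_opd p q, acm_opdR_opQ p q,
    acm_opdRs_opds p q, acm_opdRs_opQs p q⟩

/-- On `𝒫`: `[D,G] = L`, `{d,d*} = L`, `d² = 0`, `(d*)² = 0`, `L` commutes
with `G, D, d, d*`, `[D,d] = [D,d*] = 0`, `[G,d] = [G,d*] = 0` (so `G, D, L, d, d*` realize
the Heisenberg Lie superalgebra `𝔥(2|1,1)` with center spanned by `L`), together with the
cross relations `[D,R] = 2G`, `[G,T] = −2D`, `[G,δ] = −d`, `[G,Q*] = −d*`, `[D,δ*] = d*`,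
`[D,Q] = d`, `{d,δ*} = G`, `{d,Q*} = D`, `{d*,δ} = D`, `{d*,Q} = G`, `{d,δ} = 0`,
`{d,Q} = 0`, `{d*,δ*} = 0`, `{d*,Q*} = 0`. -/
theorem statement5 (p q : ℕ) (hn : 1 ≤ p + q) :
    cm (opD p q) (opG p q) = opL p q ∧
    acm (opdR p q) (opdRs p q) = opL p q ∧
    opdR p q * opdR p q = 0 ∧
    opdRs p q * opdRs p q = 0 ∧
    cm (opL p q) (opG p q) = 0 ∧
    cm (opL p q) (opD p q) = 0 ∧
    cm (opL p q) (opdR p q) = 0 ∧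
    cm (opL p q) (opdRs p q) = 0 ∧
    cm (opD p q) (opdR p q) = 0 ∧
    cm (opD p q) (opdRs p q) = 0 ∧
    cm (opG p q) (opdR p q) = 0 ∧
    cm (opG p q) (opdRs p q) = 0 ∧
    cm (opD p q) (opR p q) = (2:ℝ) • opG p q ∧
    cm (opG p q) (opT p q) = (-2:ℝ) • opD p q ∧
    cm (opG p q) (opd p q) = - opdR p q ∧
    cm (opG p q) (opQs p q) = - opdRs p q ∧
    cm (opD p q) (opds p q) = opdRs p q ∧
    cm (opD p q) (opQ p q) = opdR p q ∧
    acm (opdR p q) (opds p q) = opG p q ∧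
    acm (opdR p q) (opQs p q) = opD p q ∧
    acm (opdRs p q) (opd p q) = opD p q ∧
    acm (opdRs p q) (opQ p q) = opG p q ∧
    acm (opdR p q) (opd p q) = 0 ∧
    acm (opdR p q) (opQ p q) = 0 ∧
    acm (opdRs p q) (opds p q) = 0 ∧
    acm (opdRs p q) (opQs p q) = 0 :=
  statement5_general p q

end

end SpinQuant
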